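/- (Exact von Mises remainder identity.) In the capture-recapture setup, assume MAR and positivity. Let q̄_y(v,x) > 0, q̄_y(v) > 0, π̄(y,v) > 0 be arbitrary candidate nuisance functions defined on the support, and set 1/γ̄(v,x) = 1 + Π_{y ≠ 0} q̄_y(v,x)^{(−1)^{|y|+1}}, 1/γ(v,x) = 1 + Π_{y ≠ 0} q_y(v,x)^{(−1)^{|y|+1}}, and m̄(v) = E_Q[ 1/γ̄(V,X) − 1 | V=v ]. Define, for an observation z = (y,v,x,r) with y ≠ 0, φ̃(z) = Σ_{y' ≠ 0} (−1)^{1+|y'|} { (r·1(y=y') / π̄(y',v)) · [ (1/q̄_{y'}(v,x))(1/γ̄(v,x) − 1) − (1/q̄_{y'}(v)) m̄(v) ] + (1(y=y')/q̄_{y'}(v)) m̄(v) }. Then E_Q[ φ̃(Y,V,X,R) ] − E_Q[ 1/γ(V,X) − 1 ] = E_Q[ (1/γ̄(V,X) − 1) Σ_{y ≠ 0} (−1)^{1+|y|} ((π(y,V) − π̄(y,V))/π̄(y,V)) ( (q_y(V,X) − q̄_y(V,X))/q̄_y(V,X) − (q_y(V) − q̄_y(V))/q̄_y(V) ) ] +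 E_Q[ (1/γ̄(V,X) − 1) Σ_{y ≠ 0} (−1)^{1+|y|} q_y(V,X)/q̄_y(V,X) − (1/γ(V,X) − 1) ]. -/

import Mathlib

open scoped Classical
open Finset

/-- Probability `P(A)` of an event `A` under a probability weight `w` on a finite
outcome space `Ω`. -/
noncomputable def pr {Ω : Type*} [Fintype Ω] (w : Ω → ℝ) (A : Ω → Prop) : ℝ :=
  ∑ ω, if A ω then w ω else 0

/-- Conditional probability `P(A | B)` under the weight `w`. -/
noncomputable def cpr {Ω : Type*} [Fintype Ω] (w : Ω → ℝ) (A B : Ω → Prop) : ℝ :=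
  pr w (fun ω => A ω ∧ B ω) / pr w B

/-- Conditional expectation `E[f | B]` under the weight `w`. -/
noncomputable def cexp {Ω : Type*} [Fintype Ω] (w : Ω → ℝ) (f : Ω → ℝ) (B : Ω → Prop) : ℝ :=
  (∑ ω, if B ω then w ω * f ω else 0) / pr w B

/-- Full conditional q-probability `q_y(v,x) = Q(Y = y | V = v, X = x)`, where `Q` is the
law of the data conditional on capture (`Y ≠ 0`). -/
noncomputable def qfull {Ω 𝒱 𝒳 : Type*} [Fintype Ω] {K : ℕ}
    (w : Ω → ℝ) (Y : Ω → Finset (Fin K)) (V : Ω → 𝒱) (X : Ω → 𝒳)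
    (y : Finset (Fin K)) (v : 𝒱) (x : 𝒳) : ℝ :=
  cpr w (fun ω => Y ω = y) (fun ω => V ω = v ∧ X ω = x ∧ Y ω ≠ ∅)

/-- `V`-only conditional q-probability `q_y(v) = Q(Y = y | V = v)`. -/
noncomputable def qV {Ω 𝒱 : Type*} [Fintype Ω] {K : ℕ}
    (w : Ω → ℝ) (Y : Ω → Finset (Fin K)) (V : Ω → 𝒱)
    (y : Finset (Fin K)) (v : 𝒱) : ℝ :=
  cpr w (fun ω => Y ω = y) (fun ω => V ω = v ∧ Y ω ≠ ∅)

/-- Covariate distribution among the fully observed,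
`λ_x(y,v) = Q(X = x | Y = y, V = v, R = 1)`. -/
noncomputable def lam {Ω 𝒱 𝒳 : Type*} [Fintype Ω] {K : ℕ}
    (w : Ω → ℝ) (Y : Ω → Finset (Fin K)) (V : Ω → 𝒱) (X : Ω → 𝒳) (R : Ω → Bool)
    (x : 𝒳) (y : Finset (Fin K)) (v : 𝒱) : ℝ :=
  cpr w (fun ω => X ω = x) (fun ω => Y ω = y ∧ V ω = v ∧ R ω = true ∧ Y ω ≠ ∅)

/-- Missingness propensity score `π(y,v) = Q(R = 1 | Y = y, V = v)`. -/
noncomputable def piR {Ω 𝒱 : Type*} [Fintype Ω] {K : ℕ}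
    (w : Ω → ℝ) (Y : Ω → Finset (Fin K)) (V : Ω → 𝒱) (R : Ω → Bool)
    (y : Finset (Fin K)) (v : 𝒱) : ℝ :=
  cpr w (fun ω => R ω = true) (fun ω => Y ω = y ∧ V ω = v ∧ Y ω ≠ ∅)

/-!
Expand `φ̃` over the capture profiles `y ≠ 0` and treat each term separately. By MAR the indicator
of `R = 1` may be replaced by `π(y, V)` against any function of `(X, Y, V)`; by the tower property
the indicator of `Y = y` may be replaced by `q_y(V, X)` against functions of `(V, X)` and by
`q_y(V)` against functions of `V`, and `m̄(V)` may be replaced by `1/γ̄ − 1` against functions of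
`V`. After these substitutions the `y`-th term of `E_Q[φ̃]` and of the remainder agree pointwise:
`(π/π̄ − 1)(q/q̄ − q_V/q̄_V) + q/q̄ = π q/(π̄ q̄) + (1 − π/π̄) q_V/q̄_V`.
The terms in `1/γ` are the same on both sides.
-/

noncomputable def setSum {Ω : Type*} [Fintype Ω] (w : Ω → ℝ) (B : Ω → Prop) (f : Ω → ℝ) : ℝ :=
  ∑ ω, if B ω then w ω * f ω else 0

section WeightedSums

variable {Ω : Type*} [Fintype Ω] {w : Ω → ℝ} {B : Ω → Prop}

lemma pr_congr {A : Ω → Prop} (h : ∀ ω, A ω ↔ B ω) : pr w A = pr w B := by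
  simp only [pr, h]

lemma pr_nonneg (hw0 : ∀ ω, 0 ≤ w ω) (A : Ω → Prop) : 0 ≤ pr w A :=
  sum_nonneg fun ω _ => by split_ifs <;> simp [hw0 ω]

lemma pr_mono (hw0 : ∀ ω, 0 ≤ w ω) {A : Ω → Prop} (h : ∀ ω, A ω → B ω) : pr w A ≤ pr w B :=
  sum_le_sum fun ω _ => by
    by_cases hA : A ω
    · simp [hA, h ω hA]
    · by_cases hB : B ω <;> simp [hA, hB, hw0 ω]

lemma pr_pos_of_mem (hw0 : ∀ ω, 0 ≤ w ω) {ω : Ω} (hB : B ω) (hw : w ω ≠ 0) : 0 < pr w B := by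
  have : (if B ω then w ω else 0) ≤ pr w B :=
    single_le_sum (f := fun ω => if B ω then w ω else 0)
      (fun ω _ => by by_cases h : B ω <;> simp [h, hw0 ω]) (mem_univ ω)
  rw [if_pos hB] at this
  exact (lt_of_le_of_ne (hw0 ω) hw.symm).trans_le this

lemma cexp_eq_setSum_div (f : Ω → ℝ) : cexp w f B = setSum w B f / pr w B := rfl

lemma setSum_congr {f g : Ω → ℝ} (h : ∀ ω, B ω → w ω ≠ 0 → f ω = g ω) :
    setSum w B f = setSum w B g := by
  refine sum_congr rfl fun ω _ => ?_
  split_ifs with hB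
  · by_cases hw : w ω = 0
    · simp [hw]
    · rw [h ω hB hw]
  · rfl

lemma setSum_add (f g : Ω → ℝ) :
    setSum w B (fun ω => f ω + g ω) = setSum w B f + setSum w B g := by
  simp only [setSum, ← sum_add_distrib]
  exact sum_congr rfl fun ω _ => by split_ifs <;> ring

lemma setSum_sub (f g : Ω → ℝ) :
    setSum w B (fun ω => f ω - g ω) = setSum w B f - setSum w B g := by
  simp only [setSum, ← sum_sub_distrib]
  exact sum_congr rfl fun ω _ => by split_ifs <;> ring

lemma setSum_const_mul (c : ℝ) (f : Ω → ℝ) :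
    setSum w B (fun ω => c * f ω) = c * setSum w B f := by
  simp only [setSum, mul_sum]
  exact sum_congr rfl fun ω _ => by split_ifs <;> ring

lemma setSum_sum {ι : Type*} (s : Finset ι) (f : ι → Ω → ℝ) :
    setSum w B (fun ω => ∑ i ∈ s, f i ω) = ∑ i ∈ s, setSum w B (f i) := by
  simp only [setSum, mul_sum]
  rw [sum_comm]
  exact sum_congr rfl fun ω _ => by split_ifs <;> simp

lemma setSum_const (c : ℝ) : setSum w B (fun _ => c) = c * pr w B := by
  simp only [setSum, pr, mul_sum]
  exact sum_congr rfl fun ω _ => by split_ifs <;> ring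

lemma setSum_indicator (A : Ω → Prop) [DecidablePred A] :
    setSum w B (fun ω => if A ω then 1 else 0) = pr w (fun ω => A ω ∧ B ω) := by
  simp only [setSum, pr]
  exact sum_congr rfl fun ω _ => by by_cases hA : A ω <;> by_cases hB : B ω <;> simp [hA, hB]

lemma setSum_eq_sum_fiberwise {α : Type*} (g : Ω → α) (f : Ω → ℝ) :
    setSum w B f = ∑ a ∈ univ.image g, setSum w (fun ω => g ω = a ∧ B ω) f := by
  rw [setSum, ← sum_fiberwise_of_maps_to (fun ω _ => mem_image_of_mem g (mem_univ ω))]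
  refine sum_congr rfl fun a _ => ?_
  rw [sum_filter, setSum]
  exact sum_congr rfl fun ω _ => by by_cases hg : g ω = a <;> simp [hg]

/-- `hc` says `c ∘ g = E[f | g]` on `B`, in product form so that it also holds on null fibres. -/
lemma setSum_mul_comp_eq {α : Type*} (g : Ω → α) (f : Ω → ℝ) (c : α → ℝ)
    (hc : ∀ a, setSum w (fun ω => g ω = a ∧ B ω) f = c a * pr w (fun ω => g ω = a ∧ B ω))
    (H : α → ℝ) :
    setSum w B (fun ω => f ω * H (g ω)) = setSum w B (fun ω => c (g ω) * H (g ω)) := by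
  rw [setSum_eq_sum_fiberwise g, setSum_eq_sum_fiberwise g]
  refine sum_congr rfl fun a _ => ?_
  have on_fiber : ∀ F : α → ℝ, setSum w (fun ω => g ω = a ∧ B ω) (fun ω => F (g ω))
      = setSum w (fun ω => g ω = a ∧ B ω) (fun _ => F a) :=
    fun F => setSum_congr fun ω h _ => by rw [h.1]
  calc setSum w (fun ω => g ω = a ∧ B ω) (fun ω => f ω * H (g ω))
      = H a * setSum w (fun ω => g ω = a ∧ B ω) f := by
        rw [← setSum_const_mul]
        exact setSum_congr fun ω h _ => by rw [h.1, mul_comm]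
    _ = setSum w (fun ω => g ω = a ∧ B ω) (fun ω => c (g ω) * H (g ω)) := by
        rw [hc, on_fiber (fun b => c b * H b), setSum_const]
        ring

lemma setSum_eq_cexp_mul (hw0 : ∀ ω, 0 ≤ w ω) (f : Ω → ℝ) :
    setSum w B f = cexp w f B * pr w B := by
  rw [cexp_eq_setSum_div]
  rcases eq_or_ne (pr w B) 0 with hB | hB
  · rw [hB, mul_zero]
    refine sum_eq_zero fun ω _ => ?_
    split_ifs with h
    · rw [not_ne_iff.mp fun hw => (pr_pos_of_mem hw0 h hw).ne' hB, zero_mul]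
    · rfl
  · rw [div_mul_cancel₀ _ hB]

lemma pr_and_eq_cpr_mul (hw0 : ∀ ω, 0 ≤ w ω) (A : Ω → Prop) :
    pr w (fun ω => A ω ∧ B ω) = cpr w A B * pr w B := by
  rw [← setSum_indicator, setSum_eq_cexp_mul hw0, cexp_eq_setSum_div, setSum_indicator, cpr]

lemma pr_and_and_eq_cpr_mul_of_condIndep (hw0 : ∀ ω, 0 ≤ w ω) {A C E : Ω → Prop}
    (hAC : 0 < pr w E → cpr w (fun ω => A ω ∧ C ω) E = cpr w A E * cpr w C E) :
    pr w (fun ω => C ω ∧ A ω ∧ E ω) = cpr w C E * pr w (fun ω => A ω ∧ E ω) := by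
  rcases (pr_nonneg hw0 E).eq_or_lt with hE | hE
  · have hCAE := pr_mono hw0 (A := fun ω => C ω ∧ A ω ∧ E ω) fun ω h => h.2.2
    rw [cpr, ← hE, div_zero, zero_mul]
    exact le_antisymm (hE ▸ hCAE) (pr_nonneg hw0 _)
  · have h := hAC hE
    rw [cpr, cpr, cpr, div_mul_div_comm, div_eq_div_iff hE.ne' (mul_pos hE hE).ne'] at h
    rw [cpr, pr_congr (B := fun ω => (A ω ∧ C ω) ∧ E ω) fun ω => by tauto, div_mul_eq_mul_div,
      eq_div_iff hE.ne']
    refine mul_right_cancel₀ hE.ne' ?_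
    linear_combination h

end WeightedSums

section CaptureRecapture

variable {Ω 𝒱 𝒳 : Type*} [Fintype Ω] {K : ℕ} {w : Ω → ℝ} {Y : Ω → Finset (Fin K)}
  {V : Ω → 𝒱} {X : Ω → 𝒳} {R : Ω → Bool}

lemma setSum_indicator_mul_eq_qfull_mul (hw0 : ∀ ω, 0 ≤ w ω) (y : Finset (Fin K))
    (H : 𝒱 × 𝒳 → ℝ) :
    setSum w (fun ω => Y ω ≠ ∅) (fun ω => (if Y ω = y then 1 else 0) * H (V ω, X ω))
      = setSum w (fun ω => Y ω ≠ ∅) (fun ω => qfull w Y V X y (V ω) (X ω) * H (V ω, X ω)) :=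
  setSum_mul_comp_eq (fun ω => (V ω, X ω)) _ (fun a => qfull w Y V X y a.1 a.2)
    (fun ⟨v, x⟩ => by
      simp only [Prod.mk.injEq, and_assoc, setSum_indicator]
      exact pr_and_eq_cpr_mul hw0 _) H

lemma setSum_indicator_mul_eq_qV_mul (hw0 : ∀ ω, 0 ≤ w ω) (y : Finset (Fin K)) (H : 𝒱 → ℝ) :
    setSum w (fun ω => Y ω ≠ ∅) (fun ω => (if Y ω = y then 1 else 0) * H (V ω))
      = setSum w (fun ω => Y ω ≠ ∅) (fun ω => qV w Y V y (V ω) * H (V ω)) :=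
  setSum_mul_comp_eq V _ (qV w Y V y)
    (fun _ => by rw [setSum_indicator]; exact pr_and_eq_cpr_mul hw0 _) H

lemma setSum_indicator_mul_eq_piR_mul (hw0 : ∀ ω, 0 ≤ w ω)
    (hMAR : ∀ (y : Finset (Fin K)) (v : 𝒱) (x : 𝒳),
      0 < pr w (fun ω => Y ω = y ∧ V ω = v ∧ Y ω ≠ ∅) →
      cpr w (fun ω => X ω = x ∧ R ω = true) (fun ω => Y ω = y ∧ V ω = v ∧ Y ω ≠ ∅)
        = cpr w (fun ω => X ω = x) (fun ω => Y ω = y ∧ V ω = v ∧ Y ω ≠ ∅)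
          * cpr w (fun ω => R ω = true) (fun ω => Y ω = y ∧ V ω = v ∧ Y ω ≠ ∅))
    (H : 𝒳 × Finset (Fin K) × 𝒱 → ℝ) :
    setSum w (fun ω => Y ω ≠ ∅) (fun ω => (if R ω = true then 1 else 0) * H (X ω, Y ω, V ω))
      = setSum w (fun ω => Y ω ≠ ∅) (fun ω => piR w Y V R (Y ω) (V ω) * H (X ω, Y ω, V ω)) :=
  setSum_mul_comp_eq (fun ω => (X ω, Y ω, V ω)) _ (fun a => piR w Y V R a.2.1 a.2.2)
    (fun ⟨x, y, v⟩ => by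
      simp only [Prod.mk.injEq, and_assoc, setSum_indicator]
      exact pr_and_and_eq_cpr_mul_of_condIndep hw0 (hMAR y v x)) H

lemma setSum_mul_eq_cexp_mul (hw0 : ∀ ω, 0 ≤ w ω) (G : 𝒱 → 𝒳 → ℝ) (H : 𝒱 → ℝ) :
    setSum w (fun ω => Y ω ≠ ∅) (fun ω => G (V ω) (X ω) * H (V ω))
      = setSum w (fun ω => Y ω ≠ ∅) (fun ω =>
          cexp w (fun ω' => G (V ω') (X ω')) (fun ω' => V ω' = V ω ∧ Y ω' ≠ ∅) * H (V ω)) :=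
  setSum_mul_comp_eq V _
    (fun v => cexp w (fun ω' => G (V ω') (X ω')) (fun ω' => V ω' = v ∧ Y ω' ≠ ∅))
    (fun _ => setSum_eq_cexp_mul hw0 _) H

lemma setSum_oneStep_eq (hw0 : ∀ ω, 0 ≤ w ω)
    (hMAR : ∀ (y : Finset (Fin K)) (v : 𝒱) (x : 𝒳),
      0 < pr w (fun ω => Y ω = y ∧ V ω = v ∧ Y ω ≠ ∅) →
      cpr w (fun ω => X ω = x ∧ R ω = true) (fun ω => Y ω = y ∧ V ω = v ∧ Y ω ≠ ∅)
        = cpr w (fun ω => X ω = x) (fun ω => Y ω = y ∧ V ω = v ∧ Y ω ≠ ∅)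
          * cpr w (fun ω => R ω = true) (fun ω => Y ω = y ∧ V ω = v ∧ Y ω ≠ ∅))
    (y : Finset (Fin K)) (G : 𝒱 → 𝒳 → ℝ) (m : 𝒱 → ℝ)
    (hm : ∀ v, m v = cexp w (fun ω => G (V ω) (X ω)) (fun ω => V ω = v ∧ Y ω ≠ ∅))
    (qb : 𝒱 → 𝒳 → ℝ) (qVb pib : 𝒱 → ℝ)
    (hb : ∀ ω, Y ω ≠ ∅ → w ω ≠ 0 → qb (V ω) (X ω) ≠ 0 ∧ qVb (V ω) ≠ 0 ∧ pib (V ω) ≠ 0) :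
    setSum w (fun ω => Y ω ≠ ∅) (fun ω =>
        ((if R ω = true then 1 else 0) * (if Y ω = y then 1 else 0)) / pib (V ω) *
          (1 / qb (V ω) (X ω) * G (V ω) (X ω) - 1 / qVb (V ω) * m (V ω))
        + (if Y ω = y then 1 else 0) / qVb (V ω) * m (V ω))
      = setSum w (fun ω => Y ω ≠ ∅) (fun ω => G (V ω) (X ω) *
          ((piR w Y V R y (V ω) - pib (V ω)) / pib (V ω) *
              ((qfull w Y V X y (V ω) (X ω) - qb (V ω) (X ω)) / qb (V ω) (X ω)
                - (qV w Y V y (V ω) - qVb (V ω)) / qVb (V ω))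
            + qfull w Y V X y (V ω) (X ω) / qb (V ω) (X ω))) := by
  set π := piR w Y V R y
  set q := qfull w Y V X y
  set qv := qV w Y V y
  calc _ = setSum w (fun ω => Y ω ≠ ∅) (fun ω => (if R ω = true then 1 else 0) *
            ((if Y ω = y then 1 else 0) *
              ((G (V ω) (X ω) / qb (V ω) (X ω) - m (V ω) / qVb (V ω)) / pib (V ω))))
        + setSum w (fun ω => Y ω ≠ ∅) (fun ω =>
            (if Y ω = y then 1 else 0) * (m (V ω) / qVb (V ω))) := by
        rw [← setSum_add]
        exact setSum_congr fun ω _ _ => by ring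
    _ = setSum w (fun ω => Y ω ≠ ∅) (fun ω => (if Y ω = y then 1 else 0) *
            (π (V ω) * G (V ω) (X ω) / (pib (V ω) * qb (V ω) (X ω))))
        + setSum w (fun ω => Y ω ≠ ∅) (fun ω => (if Y ω = y then 1 else 0) *
            ((1 - π (V ω) / pib (V ω)) * m (V ω) / qVb (V ω))) := by
        rw [setSum_indicator_mul_eq_piR_mul hw0 hMAR
          (fun p => (if p.2.1 = y then 1 else 0) *
            ((G p.2.2 p.1 / qb p.2.2 p.1 - m p.2.2 / qVb p.2.2) / pib p.2.2)),
          ← setSum_add, ← setSum_add]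
        refine setSum_congr fun ω _ _ => ?_
        by_cases hy : Y ω = y
        · simp only [hy, if_true]
          ring
        · simp [hy]
    _ = setSum w (fun ω => Y ω ≠ ∅) (fun ω => q (V ω) (X ω) *
            (π (V ω) * G (V ω) (X ω) / (pib (V ω) * qb (V ω) (X ω))))
        + setSum w (fun ω => Y ω ≠ ∅) (fun ω => G (V ω) (X ω) *
            ((1 - π (V ω) / pib (V ω)) * qv (V ω) / qVb (V ω))) := by
        rw [setSum_indicator_mul_eq_qfull_mul hw0 y
            (fun p => π p.1 * G p.1 p.2 / (pib p.1 * qb p.1 p.2)),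
          setSum_indicator_mul_eq_qV_mul hw0 y
            (fun v => (1 - π v / pib v) * m v / qVb v),
          setSum_mul_eq_cexp_mul hw0 G (fun v => (1 - π v / pib v) * qv v / qVb v)]
        congr 1
        exact setSum_congr fun ω _ _ => by rw [← hm]; ring
    _ = _ := by
        rw [← setSum_add]
        refine setSum_congr fun ω hY hw => ?_
        obtain ⟨hqb, hqVb, hpib⟩ := hb ω hY hw
        field_simp
        ring

end CaptureRecapture

theorem von_mises_remainder_identity_general
    {Ω 𝒱 𝒳 : Type*} [Fintype Ω] {K : ℕ}
    (w : Ω → ℝ) (Y : Ω → Finset (Fin K)) (V : Ω → 𝒱) (X : Ω → 𝒳) (R : Ω → Bool)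
    (hw0 : ∀ ω, 0 ≤ w ω)
    -- MAR: X and R are conditionally independent given (V, Y) under Q
    (hMAR : ∀ (y : Finset (Fin K)) (v : 𝒱) (x : 𝒳) (r : Bool),
      0 < pr w (fun ω => Y ω = y ∧ V ω = v ∧ Y ω ≠ ∅) →
      cpr w (fun ω => X ω = x ∧ R ω = r) (fun ω => Y ω = y ∧ V ω = v ∧ Y ω ≠ ∅)
        = cpr w (fun ω => X ω = x) (fun ω => Y ω = y ∧ V ω = v ∧ Y ω ≠ ∅)
          * cpr w (fun ω => R ω = r) (fun ω => Y ω = y ∧ V ω = v ∧ Y ω ≠ ∅))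
    -- candidate nuisance functions, positive on the support
    (qb : Finset (Fin K) → 𝒱 → 𝒳 → ℝ) (qVb : Finset (Fin K) → 𝒱 → ℝ)
    (pib : Finset (Fin K) → 𝒱 → ℝ)
    (hbpos : ∀ y : Finset (Fin K), y ≠ ∅ → ∀ (v : 𝒱) (x : 𝒳),
      0 < pr w (fun ω => V ω = v ∧ X ω = x ∧ Y ω ≠ ∅) →
      0 < qb y v x ∧ 0 < qVb y v ∧ 0 < pib y v)
    -- gib v x = 1/γ̄(v,x) and gi v x = 1/γ(v,x)
    (gib gi : 𝒱 → 𝒳 → ℝ)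
    -- m̄(v) = E_Q[1/γ̄(V,X) − 1 | V = v]
    (mb : 𝒱 → ℝ)
    (hmb : ∀ v : 𝒱, mb v
      = cexp w (fun ω => gib (V ω) (X ω) - 1) (fun ω => V ω = v ∧ Y ω ≠ ∅))
    -- the uncentered one-step functional φ̃(z) for z = (y,v,x,r) with y ≠ 0
    (φt : Finset (Fin K) → 𝒱 → 𝒳 → Bool → ℝ)
    (hφt : ∀ (y : Finset (Fin K)) (v : 𝒱) (x : 𝒳) (r : Bool), φt y v x r
      = ∑ y' ∈ Finset.univ.filter (fun y' : Finset (Fin K) => y' ≠ ∅),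
          (-1 : ℝ) ^ (1 + y'.card) *
            (((if r = true then (1 : ℝ) else 0) * (if y = y' then (1 : ℝ) else 0))
                / pib y' v *
              ((1 / qb y' v x) * (gib v x - 1) - (1 / qVb y' v) * mb v)
            + (if y = y' then (1 : ℝ) else 0) / qVb y' v * mb v)) :
    cexp w (fun ω => φt (Y ω) (V ω) (X ω) (R ω)) (fun ω => Y ω ≠ ∅)
      - cexp w (fun ω => gi (V ω) (X ω) - 1) (fun ω => Y ω ≠ ∅)
    = cexp w (fun ω => (gib (V ω) (X ω) - 1) *
          ∑ y ∈ Finset.univ.filter (fun y : Finset (Fin K) => y ≠ ∅),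
            (-1 : ℝ) ^ (1 + y.card) *
              ((piR w Y V R y (V ω) - pib y (V ω)) / pib y (V ω)) *
              ((qfull w Y V X y (V ω) (X ω) - qb y (V ω) (X ω)) / qb y (V ω) (X ω)
                - (qV w Y V y (V ω) - qVb y (V ω)) / qVb y (V ω)))
        (fun ω => Y ω ≠ ∅)
      + cexp w (fun ω => (gib (V ω) (X ω) - 1) *
            (∑ y ∈ Finset.univ.filter (fun y : Finset (Fin K) => y ≠ ∅),
              (-1 : ℝ) ^ (1 + y.card) *
                (qfull w Y V X y (V ω) (X ω) / qb y (V ω) (X ω)))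
          - (gi (V ω) (X ω) - 1))
        (fun ω => Y ω ≠ ∅) := by
  have hb : ∀ y ∈ univ.filter (fun y : Finset (Fin K) => y ≠ ∅), ∀ ω, Y ω ≠ ∅ → w ω ≠ 0 →
      qb y (V ω) (X ω) ≠ 0 ∧ qVb y (V ω) ≠ 0 ∧ pib y (V ω) ≠ 0 := fun y hy ω hY hw => by
    obtain ⟨h1, h2, h3⟩ := hbpos y (mem_filter.mp hy).2 _ _
      (pr_pos_of_mem hw0 (B := fun ω' => V ω' = V ω ∧ X ω' = X ω ∧ Y ω' ≠ ∅) ⟨rfl, rfl, hY⟩ hw)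
    exact ⟨h1.ne', h2.ne', h3.ne'⟩
  have hφ : setSum w (fun ω => Y ω ≠ ∅) (fun ω => φt (Y ω) (V ω) (X ω) (R ω))
      = setSum w (fun ω => Y ω ≠ ∅) (fun ω => (gib (V ω) (X ω) - 1) *
          ∑ y ∈ univ.filter (fun y : Finset (Fin K) => y ≠ ∅),
            (-1 : ℝ) ^ (1 + y.card) *
              ((piR w Y V R y (V ω) - pib y (V ω)) / pib y (V ω)) *
              ((qfull w Y V X y (V ω) (X ω) - qb y (V ω) (X ω)) / qb y (V ω) (X ω)
                - (qV w Y V y (V ω) - qVb y (V ω)) / qVb y (V ω)))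
        + setSum w (fun ω => Y ω ≠ ∅) (fun ω => (gib (V ω) (X ω) - 1) *
            ∑ y ∈ univ.filter (fun y : Finset (Fin K) => y ≠ ∅),
              (-1 : ℝ) ^ (1 + y.card) *
                (qfull w Y V X y (V ω) (X ω) / qb y (V ω) (X ω))) := by
    simp only [hφt, setSum_sum, setSum_const_mul]
    refine (sum_congr rfl fun y hy => congrArg _ (setSum_oneStep_eq hw0
      (fun y v x => hMAR y v x true) y (fun v x => gib v x - 1) mb hmb _ _ _ (hb y hy))).trans ?_
    simp only [mul_sum, setSum_sum, ← sum_add_distrib]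
    refine sum_congr rfl fun y _ => ?_
    rw [← setSum_const_mul, ← setSum_add]
    exact setSum_congr fun ω _ _ => by ring
  simp only [cexp_eq_setSum_div, setSum_sub, hφ]
  ring

/-- **Exact von Mises remainder identity.** In the capture-recapture setup,
assume MAR and positivity. Let `q̄_y(v,x) > 0`, `q̄_y(v) > 0`, `π̄(y,v) > 0` be arbitrary
candidate nuisance functions on the support, set
`1/γ̄(v,x) = 1 + Π_{y ≠ 0} q̄_y(v,x)^{(−1)^{|y|+1}}` (denoted `gib`),
`1/γ(v,x) = 1 + Π_{y ≠ 0} q_y(v,x)^{(−1)^{|y|+1}}` (denoted `gi`), and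
`m̄(v) = E_Q[ 1/γ̄(V,X) − 1 | V=v ]`.  With `φ̃` the uncentered one-step functional,
`E_Q[φ̃] − E_Q[1/γ(V,X) − 1]` equals the doubly robust remainder expression. -/
theorem von_mises_remainder_identity
    {Ω 𝒱 𝒳 : Type*} [Fintype Ω] {K : ℕ} (hK : 1 ≤ K)
    (w : Ω → ℝ) (Y : Ω → Finset (Fin K)) (V : Ω → 𝒱) (X : Ω → 𝒳) (R : Ω → Bool)
    (hw0 : ∀ ω, 0 ≤ w ω) (hw1 : ∑ ω, w ω = 1)
    (hψ : 0 < pr w (fun ω => Y ω ≠ ∅))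
    -- MAR: X and R are conditionally independent given (V, Y) under Q
    (hMAR : ∀ (y : Finset (Fin K)) (v : 𝒱) (x : 𝒳) (r : Bool),
      0 < pr w (fun ω => Y ω = y ∧ V ω = v ∧ Y ω ≠ ∅) →
      cpr w (fun ω => X ω = x ∧ R ω = r) (fun ω => Y ω = y ∧ V ω = v ∧ Y ω ≠ ∅)
        = cpr w (fun ω => X ω = x) (fun ω => Y ω = y ∧ V ω = v ∧ Y ω ≠ ∅)
          * cpr w (fun ω => R ω = r) (fun ω => Y ω = y ∧ V ω = v ∧ Y ω ≠ ∅))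
    -- positivity of the true nuisance functions on the support
    (hpos : ∀ y : Finset (Fin K), y ≠ ∅ → ∀ (v : 𝒱) (x : 𝒳),
      0 < pr w (fun ω => V ω = v ∧ X ω = x ∧ Y ω ≠ ∅) →
      0 < qfull w Y V X y v x ∧ 0 < qV w Y V y v ∧ 0 < piR w Y V R y v)
    -- candidate nuisance functions, positive on the support
    (qb : Finset (Fin K) → 𝒱 → 𝒳 → ℝ) (qVb : Finset (Fin K) → 𝒱 → ℝ)
    (pib : Finset (Fin K) → 𝒱 → ℝ)
    (hbpos : ∀ y : Finset (Fin K), y ≠ ∅ → ∀ (v : 𝒱) (x : 𝒳),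
      0 < pr w (fun ω => V ω = v ∧ X ω = x ∧ Y ω ≠ ∅) →
      0 < qb y v x ∧ 0 < qVb y v ∧ 0 < pib y v)
    -- gib v x = 1/γ̄(v,x) and gi v x = 1/γ(v,x)
    (gib gi : 𝒱 → 𝒳 → ℝ)
    (hgib : ∀ (v : 𝒱) (x : 𝒳), gib v x
      = 1 + ∏ y ∈ Finset.univ.filter (fun y : Finset (Fin K) => y ≠ ∅),
          qb y v x ^ ((-1 : ℤ) ^ (y.card + 1)))
    (hgi : ∀ (v : 𝒱) (x : 𝒳), gi v x
      = 1 + ∏ y ∈ Finset.univ.filter (fun y : Finset (Fin K) => y ≠ ∅),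
          qfull w Y V X y v x ^ ((-1 : ℤ) ^ (y.card + 1)))
    -- m̄(v) = E_Q[1/γ̄(V,X) − 1 | V = v]
    (mb : 𝒱 → ℝ)
    (hmb : ∀ v : 𝒱, mb v
      = cexp w (fun ω => gib (V ω) (X ω) - 1) (fun ω => V ω = v ∧ Y ω ≠ ∅))
    -- the uncentered one-step functional φ̃(z) for z = (y,v,x,r) with y ≠ 0
    (φt : Finset (Fin K) → 𝒱 → 𝒳 → Bool → ℝ)
    (hφt : ∀ (y : Finset (Fin K)) (v : 𝒱) (x : 𝒳) (r : Bool), φt y v x r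
      = ∑ y' ∈ Finset.univ.filter (fun y' : Finset (Fin K) => y' ≠ ∅),
          (-1 : ℝ) ^ (1 + y'.card) *
            (((if r = true then (1 : ℝ) else 0) * (if y = y' then (1 : ℝ) else 0))
                / pib y' v *
              ((1 / qb y' v x) * (gib v x - 1) - (1 / qVb y' v) * mb v)
            + (if y = y' then (1 : ℝ) else 0) / qVb y' v * mb v)) :
    cexp w (fun ω => φt (Y ω) (V ω) (X ω) (R ω)) (fun ω => Y ω ≠ ∅)
      - cexp w (fun ω => gi (V ω) (X ω) - 1) (fun ω => Y ω ≠ ∅)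
    = cexp w (fun ω => (gib (V ω) (X ω) - 1) *
          ∑ y ∈ Finset.univ.filter (fun y : Finset (Fin K) => y ≠ ∅),
            (-1 : ℝ) ^ (1 + y.card) *
              ((piR w Y V R y (V ω) - pib y (V ω)) / pib y (V ω)) *
              ((qfull w Y V X y (V ω) (X ω) - qb y (V ω) (X ω)) / qb y (V ω) (X ω)
                - (qV w Y V y (V ω) - qVb y (V ω)) / qVb y (V ω)))
        (fun ω => Y ω ≠ ∅)
      + cexp w (fun ω => (gib (V ω) (X ω) - 1) *
            (∑ y ∈ Finset.univ.filter (fun y : Finset (Fin K) => y ≠ ∅),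
              (-1 : ℝ) ^ (1 + y.card) *
                (qfull w Y V X y (V ω) (X ω) / qb y (V ω) (X ω)))
          - (gi (V ω) (X ω) - 1))
        (fun ω => Y ω ≠ ∅) :=
  von_mises_remainder_identity_general w Y V X R hw0 hMAR qb qVb pib hbpos gib gi mb hmb φt hφt
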